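/- arXiv:2107.07659 — 5 statements merged into one kernel-verified Lean document; each statement's English description precedes it below -/
import Mathlib

section
/- Gibbs variational maximum value: Let A be a finite nonempty set, let μ be a probability distribution on A with μ(a) > 0 for all a, let q : A → ℝ, and let λ ≥ 0, τ ≥ 0 with λ + τ > 0. Define F(π) = Σ_a π(a) q(a) − λ Σ_a π(a)(ln π(a) − ln μ(a)) + τ (−Σ_a π(a) ln π(a)) for probability distributions π on A (with the convention 0·ln 0 = 0). Then the maximum of F over the probability simplex on A equals (λ+τ) · ln ( Σ_a μ(a)^{λ/(λ+τ)} exp(q(a)/(λ+τ)) ). -/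
open Finset

/-- Gibbs variational maximum value. -/
theorem gibbs_variational_maximum_value
    {A : Type*} [Fintype A] [Nonempty A]
    (μ : A → ℝ) (hμpos : ∀ a, 0 < μ a) (hμsum : ∑ a, μ a = 1)
    (q : A → ℝ) (lam tau : ℝ) (hlam : 0 ≤ lam) (htau : 0 ≤ tau)
    (hlt : 0 < lam + tau)
    (F : (A → ℝ) → ℝ)
    (hF : ∀ π : A → ℝ, F π =
      (∑ a, π a * q a)
        - lam * ∑ a, π a * (Real.log (π a) - Real.log (μ a))
        + tau * (-∑ a, π a * Real.log (π a))) :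
    IsGreatest (F '' {π : A → ℝ | (∀ a, 0 ≤ π a) ∧ ∑ a, π a = 1})
      ((lam + tau) *
        Real.log (∑ a, μ a ^ (lam / (lam + tau)) * Real.exp (q a / (lam + tau)))) := by
  set β := lam + tau with hβ
  have hβpos : 0 < β := hlt
  have hβne : β ≠ 0 := ne_of_gt hβpos
  set w : A → ℝ := fun a => μ a ^ (lam / β) * Real.exp (q a / β) with hwdef
  have hwpos : ∀ a, 0 < w a := fun a =>
    mul_pos (Real.rpow_pos_of_pos (hμpos a) _) (Real.exp_pos _)
  set Z := ∑ a, w a with hZdef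
  have hZpos : 0 < Z := Finset.sum_pos (fun a _ => hwpos a) Finset.univ_nonempty
  have hlogw : ∀ a, Real.log (w a) = lam / β * Real.log (μ a) + q a / β := by
    intro a
    show Real.log (μ a ^ (lam / β) * Real.exp (q a / β)) = _
    rw [Real.log_mul (ne_of_gt (Real.rpow_pos_of_pos (hμpos a) _)) (Real.exp_ne_zero _),
        Real.log_rpow (hμpos a), Real.log_exp]
  have hFkey : ∀ π : A → ℝ,
      F π = β * ((∑ a, π a * Real.log (w a)) - ∑ a, π a * Real.log (π a)) := by
    intro π
    rw [hF π]
    have h1 : β * ∑ a, π a * Real.log (w a)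
        = (∑ a, π a * q a) + lam * ∑ a, π a * Real.log (μ a) := by
      rw [Finset.mul_sum, Finset.mul_sum, ← Finset.sum_add_distrib]
      refine Finset.sum_congr rfl fun a _ => ?_
      rw [hlogw a]
      field_simp
      ring
    have h2 : ∑ a, π a * (Real.log (π a) - Real.log (μ a))
        = ∑ a, π a * Real.log (π a) - ∑ a, π a * Real.log (μ a) := by
      rw [← Finset.sum_sub_distrib]
      exact Finset.sum_congr rfl fun a _ => by ring
    rw [mul_sub β, h1, h2, hβ]
    ring
  constructor
  · refine ⟨fun a => w a / Z, ⟨fun a => div_nonneg (hwpos a).le hZpos.le, ?_⟩, ?_⟩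
    · rw [← Finset.sum_div]
      exact div_self (ne_of_gt hZpos)
    · rw [hFkey]
      have hlogπ : ∀ a, Real.log (w a / Z) = Real.log (w a) - Real.log Z :=
        fun a => Real.log_div (ne_of_gt (hwpos a)) (ne_of_gt hZpos)
      have hmain : (∑ a, w a / Z * Real.log (w a)) - ∑ a, w a / Z * Real.log (w a / Z)
          = Real.log Z := by
        rw [← Finset.sum_sub_distrib]
        have hc : ∀ a ∈ univ,
            w a / Z * Real.log (w a) - w a / Z * Real.log (w a / Z)
              = w a / Z * Real.log Z := fun a _ => by rw [hlogπ a]; ring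
        rw [Finset.sum_congr rfl hc, ← Finset.sum_mul, ← Finset.sum_div,
            div_self (ne_of_gt hZpos), one_mul]
      rw [hmain]
  · rintro y ⟨π, ⟨hπ0, hπ1⟩, rfl⟩
    rw [hFkey]
    have hle : (∑ a, π a * Real.log (w a)) - ∑ a, π a * Real.log (π a) ≤ Real.log Z := by
      have hterm : ∀ a ∈ univ,
          π a * Real.log (w a) - π a * Real.log (π a) - π a * Real.log Z
            ≤ w a / Z - π a := by
        intro a _
        rcases eq_or_lt_of_le (hπ0 a) with h | h
        · rw [← h]
          simpa using div_nonneg (hwpos a).le hZpos.le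
        · have hpos : 0 < w a / (Z * π a) := div_pos (hwpos a) (mul_pos hZpos h)
          have hlog := Real.log_le_sub_one_of_pos hpos
          rw [Real.log_div (ne_of_gt (hwpos a)) (ne_of_gt (mul_pos hZpos h)),
              Real.log_mul (ne_of_gt hZpos) (ne_of_gt h)] at hlog
          have hmul := mul_le_mul_of_nonneg_left hlog h.le
          have heq : π a * (w a / (Z * π a) - 1) = w a / Z - π a := by
            field_simp
          nlinarith [hmul]
      have hsum := Finset.sum_le_sum hterm
      have hL : ∑ a, (π a * Real.log (w a) - π a * Real.log (π a) - π a * Real.log Z)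
          = (∑ a, π a * Real.log (w a)) - (∑ a, π a * Real.log (π a)) - Real.log Z := by
        rw [Finset.sum_sub_distrib, Finset.sum_sub_distrib, ← Finset.sum_mul, hπ1, one_mul]
      have hR : ∑ a, (w a / Z - π a) = 0 := by
        rw [Finset.sum_sub_distrib, ← Finset.sum_div, hπ1, div_self (ne_of_gt hZpos)]
        ring
      rw [hL, hR] at hsum
      linarith
    exact mul_le_mul_of_nonneg_left hle hβpos.le
end

section
/- Decomposition bound for the optimality gap under entropy-regularized greediness: Let S, A be finite nonempty sets, P a transition kernel, r ∈ ℝ^{S×A}, γ ∈ (0,1), τ > 0, and h ∈ ℝ^{S×A}. Let π_g be the softmax policy π_g(a|s) = exp(h(s,a)/τ) / Σ_b exp(h(s,b)/τ), and let π_* be an optimal policy, i.e. a policy such that q_{π_*} ≥ q_π componentwise for every policy π; write q_* = q_{π_*}. Then, componentwise, q_* − q_{π_g} ≤ (I − γ P_{π_*})^{-1} ( T_{π_g} h + γ τ P H(π_g) − h ) − (I − γ P_{π_g})^{-1} ( T_{π_g} h − h ). -/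
/-!
Write `L_π = I - γ P_π`. Since `P_π` averages, a maximum principle shows that `L_π x ≤ L_π y`
implies `x ≤ y`; so `L_π` is injective, hence invertible on the finite-dimensional space `ℝ^{S×A}`,
and `L_π⁻¹` is monotone. A fixed point `q_π = T_π q_π` satisfies `L_π (q_π - h) = T_π h - h`, which
gives `q_{π_g} - h = L_{π_g}⁻¹ (T_{π_g} h - h)` exactly. For `π_*`, the Gibbs variational inequality
`⟨π, h⟩ ≤ τ log ∑_b exp (h(·,b)/τ) = ⟨π_g, h⟩ + τ H(π_g)` yields
`L_{π_*} (q_* - h) = T_{π_*} h - h ≤ T_{π_g} h + γ τ P H(π_g) - h`, and monotonicity of `L_{π_*}⁻¹`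
bounds `q_* - h`.
-/
open Finset

noncomputable section

/-- A transition kernel on a finite MDP: `P s a s'` is the probability of moving to `s'`
from `s` after action `a`. -/
def IsKernel {S A : Type*} [Fintype S] (P : S → A → S → ℝ) : Prop :=
  (∀ s a s', 0 ≤ P s a s') ∧ ∀ s a, ∑ s', P s a s' = 1

/-- A policy: `π s a` is the probability of action `a` in state `s`. -/
def IsPolicy {S A : Type*} [Fintype A] (π : S → A → ℝ) : Prop :=
  (∀ s a, 0 ≤ π s a) ∧ ∀ s, ∑ a, π s a = 1

/-- `(P v)(s,a) = ∑_{s'} P(s'|s,a) v(s')`. -/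
def kerApp {S A : Type*} [Fintype S] (P : S → A → S → ℝ) (v : S → ℝ) : S → A → ℝ :=
  fun s a => ∑ s', P s a s' * v s'

/-- `⟨f₁,f₂⟩(s) = ∑_a f₁(s,a) f₂(s,a)`. -/
def dotSA {S A : Type*} [Fintype A] (f₁ f₂ : S → A → ℝ) : S → ℝ :=
  fun s => ∑ a, f₁ s a * f₂ s a

/-- The policy-induced transition operator `P_π q = P ⟨π, q⟩` on `ℝ^{S×A}`. -/
def Ppi {S A : Type*} [Fintype S] [Fintype A] (P : S → A → S → ℝ) (π : S → A → ℝ)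
    (q : S → A → ℝ) : S → A → ℝ :=
  kerApp P (dotSA π q)

/-- The Bellman evaluation operator `T_π q = r + γ P_π q`. -/
def bellman {S A : Type*} [Fintype S] [Fintype A] (P : S → A → S → ℝ) (r : S → A → ℝ)
    (γ : ℝ) (π : S → A → ℝ) (q : S → A → ℝ) : S → A → ℝ :=
  fun s a => r s a + γ * Ppi P π q s a

/-- The Shannon entropy of a policy, `H(π)(s) = -∑_a π(a|s) ln π(a|s)` (with `0 ln 0 = 0`). -/
def entPol {S A : Type*} [Fintype A] (π : S → A → ℝ) : S → ℝ :=
  fun s => -∑ a, π s a * Real.log (π s a)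

lemma sum_mul_le_of_sum_eq_one {ι : Type*} [Fintype ι] {w f : ι → ℝ} {M : ℝ}
    (hw : ∀ i, 0 ≤ w i) (hw1 : ∑ i, w i = 1) (hf : ∀ i, f i ≤ M) : ∑ i, w i * f i ≤ M :=
  calc ∑ i, w i * f i ≤ ∑ i, w i * M :=
        sum_le_sum fun i _ => mul_le_mul_of_nonneg_left (hf i) (hw i)
    _ = M := by rw [← sum_mul, hw1, one_mul]

lemma kerApp_mono {S A : Type*} [Fintype S] {P : S → A → S → ℝ} (hP : IsKernel P) {v w : S → ℝ}
    (hvw : v ≤ w) : kerApp P v ≤ kerApp P w :=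
  fun s a => sum_le_sum fun s' _ => mul_le_mul_of_nonneg_left (hvw s') (hP.1 s a s')

section PolicyEvaluation

variable {S A : Type*} [Fintype S] [Fintype A] {P : S → A → S → ℝ} {π : S → A → ℝ} {γ : ℝ}

lemma Ppi_le_of_le (hP : IsKernel P) (hπ : IsPolicy π) {q : S → A → ℝ} {M : ℝ}
    (hq : ∀ s a, q s a ≤ M) (s : S) (a : A) : Ppi P π q s a ≤ M :=
  sum_mul_le_of_sum_eq_one (hP.1 s a) (hP.2 s a) fun s' =>
    sum_mul_le_of_sum_eq_one (hπ.1 s') (hπ.2 s') (hq s')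

variable (P π) in
def ppiLinearMap : (S → A → ℝ) →ₗ[ℝ] (S → A → ℝ) where
  toFun := Ppi P π
  map_add' x y := by
    funext s a
    simp only [Ppi, kerApp, dotSA, Pi.add_apply, mul_add, sum_add_distrib]
  map_smul' c x := by
    funext s a
    simp only [Ppi, kerApp, dotSA, Pi.smul_apply, smul_eq_mul, RingHom.id_apply, mul_sum]
    exact sum_congr rfl fun _ _ => sum_congr rfl fun _ _ => by ring

lemma Ppi_sub (x y : S → A → ℝ) : Ppi P π (x - y) = Ppi P π x - Ppi P π y :=
  (ppiLinearMap P π).map_sub x y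

variable (P π γ) in
def idSubSmulPpi : (S → A → ℝ) →ₗ[ℝ] (S → A → ℝ) := LinearMap.id - γ • ppiLinearMap P π

lemma idSubSmulPpi_apply (q : S → A → ℝ) : idSubSmulPpi P π γ q = q - γ • Ppi P π q := rfl

lemma le_of_idSubSmulPpi_le (hP : IsKernel P) (hπ : IsPolicy π) (hγ0 : 0 ≤ γ) (hγ1 : γ < 1)
    {x y : S → A → ℝ} (hxy : idSubSmulPpi P π γ x ≤ idSubSmulPpi P π γ y) : x ≤ y := by
  intro s a
  obtain ⟨⟨s₀, a₀⟩, -, hmax⟩ := exists_max_image univ (fun p : S × A => (x - y) p.1 p.2)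
    ⟨(s, a), mem_univ _⟩
  set M := (x - y) s₀ a₀
  have hle : ∀ s a, (x - y) s a ≤ M := fun s a => hmax (s, a) (mem_univ _)
  have hM : M ≤ γ * Ppi P π (x - y) s₀ a₀ := by
    have hxy₀ := hxy s₀ a₀
    simp only [idSubSmulPpi_apply, Pi.sub_apply, Pi.smul_apply, smul_eq_mul] at hxy₀
    simp only [M, Ppi_sub, Pi.sub_apply]
    linarith
  have hMγ : M ≤ γ * M := hM.trans (mul_le_mul_of_nonneg_left (Ppi_le_of_le hP hπ hle s₀ a₀) hγ0)
  have hM0 : M ≤ 0 := by nlinarith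
  have hsa := hle s a
  simp only [Pi.sub_apply] at hsa
  linarith

lemma idSubSmulPpi_injective (hP : IsKernel P) (hπ : IsPolicy π) (hγ0 : 0 ≤ γ) (hγ1 : γ < 1) :
    Function.Injective (idSubSmulPpi P π γ) := fun _ _ hxy =>
  le_antisymm (le_of_idSubSmulPpi_le hP hπ hγ0 hγ1 hxy.le)
    (le_of_idSubSmulPpi_le hP hπ hγ0 hγ1 hxy.ge)

lemma invFun_idSubSmulPpi_eq (hP : IsKernel P) (hπ : IsPolicy π) (hγ0 : 0 ≤ γ) (hγ1 : γ < 1)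
    {q w : S → A → ℝ} (hq : idSubSmulPpi P π γ q = w) :
    Function.invFun (idSubSmulPpi P π γ) w = q := by
  subst hq
  exact Function.leftInverse_invFun (idSubSmulPpi_injective hP hπ hγ0 hγ1) q

lemma le_invFun_idSubSmulPpi (hP : IsKernel P) (hπ : IsPolicy π) (hγ0 : 0 ≤ γ) (hγ1 : γ < 1)
    {x w : S → A → ℝ} (hx : idSubSmulPpi P π γ x ≤ w) :
    x ≤ Function.invFun (idSubSmulPpi P π γ) w := by
  have hsurj := LinearMap.injective_iff_surjective.mp (idSubSmulPpi_injective hP hπ hγ0 hγ1)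
  apply le_of_idSubSmulPpi_le hP hπ hγ0 hγ1
  rwa [Function.rightInverse_invFun hsurj w]

lemma idSubSmulPpi_sub_eq_of_eq_bellman {r q : S → A → ℝ} (hq : q = bellman P r γ π q)
    (h : S → A → ℝ) : idSubSmulPpi P π γ (q - h) = bellman P r γ π h - h := by
  funext s a
  have hqsa := congrFun (congrFun hq s) a
  simp only [idSubSmulPpi_apply, Ppi_sub, bellman, Pi.sub_apply, Pi.smul_apply, smul_eq_mul]
    at hqsa ⊢
  linarith

end PolicyEvaluation

section Softmax

variable {S A : Type*} [Fintype A]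

def softmaxPolicy (τ : ℝ) (h : S → A → ℝ) : S → A → ℝ :=
  fun s a => Real.exp (h s a / τ) / ∑ b, Real.exp (h s b / τ)

variable [Nonempty A] (τ : ℝ) (h : S → A → ℝ)

lemma sum_exp_div_pos (s : S) : 0 < ∑ b, Real.exp (h s b / τ) :=
  sum_pos (fun _ _ => Real.exp_pos _) univ_nonempty

lemma softmaxPolicy_isPolicy : IsPolicy (softmaxPolicy τ h) :=
  ⟨fun s _ => div_nonneg (Real.exp_pos _).le (sum_exp_div_pos τ h s).le,
   fun s => by simp only [softmaxPolicy, ← sum_div, div_self (sum_exp_div_pos τ h s).ne']⟩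

lemma log_softmaxPolicy (s : S) (a : A) :
    Real.log (softmaxPolicy τ h s a) = h s a / τ - Real.log (∑ b, Real.exp (h s b / τ)) := by
  rw [softmaxPolicy, Real.log_div (Real.exp_ne_zero _) (sum_exp_div_pos τ h s).ne', Real.log_exp]

lemma dotSA_softmaxPolicy_add_entPol (hτ : τ ≠ 0) (s : S) :
    dotSA (softmaxPolicy τ h) h s + τ * entPol (softmaxPolicy τ h) s =
      τ * Real.log (∑ b, Real.exp (h s b / τ)) := by
  have hsum := (softmaxPolicy_isPolicy τ h).2 s
  simp only [dotSA, entPol, log_softmaxPolicy, mul_sub, sum_sub_distrib, ← sum_mul, hsum,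
    ← mul_div_assoc, ← sum_div]
  field_simp
  ring

lemma le_mul_log_sum_exp (hτ : 0 < τ) (s : S) (a : A) :
    h s a ≤ τ * Real.log (∑ b, Real.exp (h s b / τ)) := by
  rw [← div_le_iff₀' hτ, Real.le_log_iff_exp_le (sum_exp_div_pos τ h s)]
  exact single_le_sum (f := fun b => Real.exp (h s b / τ)) (fun _ _ => (Real.exp_pos _).le)
    (mem_univ a)

lemma dotSA_le_dotSA_softmaxPolicy_add_entPol (hτ : 0 < τ) {π : S → A → ℝ} (hπ : IsPolicy π)
    (s : S) : dotSA π h s ≤ dotSA (softmaxPolicy τ h) h s + τ * entPol (softmaxPolicy τ h) s := by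
  rw [dotSA_softmaxPolicy_add_entPol τ h hτ.ne' s]
  exact sum_mul_le_of_sum_eq_one (hπ.1 s) (hπ.2 s) (le_mul_log_sum_exp τ h hτ s)

end Softmax

lemma bellman_le_bellman_softmaxPolicy_add_entPol {S A : Type*} [Fintype S] [Fintype A]
    [Nonempty A] {P : S → A → S → ℝ} (hP : IsKernel P) {γ τ : ℝ} (hγ : 0 ≤ γ) (hτ : 0 < τ)
    {π : S → A → ℝ} (hπ : IsPolicy π) (r h : S → A → ℝ) :
    bellman P r γ π h ≤ fun s a => bellman P r γ (softmaxPolicy τ h) h s a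
      + γ * τ * kerApp P (entPol (softmaxPolicy τ h)) s a := by
  intro s a
  have hgibbs := kerApp_mono hP (dotSA_le_dotSA_softmaxPolicy_add_entPol τ h hτ hπ) s a
  have hsplit : kerApp P (fun s => dotSA (softmaxPolicy τ h) h s
        + τ * entPol (softmaxPolicy τ h) s) s a =
      kerApp P (dotSA (softmaxPolicy τ h) h) s a
        + τ * kerApp P (entPol (softmaxPolicy τ h)) s a := by
    simp only [kerApp, mul_add, sum_add_distrib, mul_sum, mul_left_comm]
  rw [hsplit] at hgibbs
  simp only [bellman, Ppi]
  linarith [mul_le_mul_of_nonneg_left hgibbs hγ]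

theorem optimality_gap_decomposition_bound_general
    {S A : Type*} [Fintype S] [Fintype A] [Nonempty A]
    (P : S → A → S → ℝ) (hP : IsKernel P)
    (r : S → A → ℝ) (γ : ℝ) (hγ0 : 0 < γ) (hγ1 : γ < 1)
    (tau : ℝ) (htau : 0 < tau) (h : S → A → ℝ)
    (πg : S → A → ℝ)
    (hπg : ∀ s a, πg s a = Real.exp (h s a / tau) / ∑ b, Real.exp (h s b / tau))
    (πstar : S → A → ℝ) (hπstar : IsPolicy πstar)
    (qstar : S → A → ℝ) (hqstar : qstar = bellman P r γ πstar qstar)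
    (qg : S → A → ℝ) (hqg : qg = bellman P r γ πg qg)
    (Lstar Lg : (S → A → ℝ) → (S → A → ℝ))
    (hLstar : ∀ q, Lstar q = q - γ • Ppi P πstar q)
    (hLg : ∀ q, Lg q = q - γ • Ppi P πg q) :
    ∀ s a, qstar s a - qg s a ≤
      Function.invFun Lstar
          (fun s a => bellman P r γ πg h s a + γ * tau * kerApp P (entPol πg) s a - h s a) s a
        - Function.invFun Lg (bellman P r γ πg h - h) s a := by
  obtain rfl : πg = softmaxPolicy tau h := funext fun s => funext (hπg s)
  obtain rfl : Lstar = idSubSmulPpi P πstar γ := funext hLstar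
  obtain rfl : Lg = idSubSmulPpi P (softmaxPolicy tau h) γ := funext hLg
  have hgreedy : Function.invFun (idSubSmulPpi P (softmaxPolicy tau h) γ)
      (bellman P r γ (softmaxPolicy tau h) h - h) = qg - h :=
    invFun_idSubSmulPpi_eq hP (softmaxPolicy_isPolicy tau h) hγ0.le hγ1
      (idSubSmulPpi_sub_eq_of_eq_bellman hqg h)
  have hoptimal : qstar - h ≤ Function.invFun (idSubSmulPpi P πstar γ)
      (fun s a => bellman P r γ (softmaxPolicy tau h) h s a
        + γ * tau * kerApp P (entPol (softmaxPolicy tau h)) s a - h s a) :=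
    le_invFun_idSubSmulPpi hP hπstar hγ0.le hγ1 <|
      (idSubSmulPpi_sub_eq_of_eq_bellman hqstar h).trans_le <|
        sub_le_sub_right (bellman_le_bellman_softmaxPolicy_add_entPol hP hγ0.le htau hπstar r h) h
  intro s a
  have hsa := hoptimal s a
  rw [hgreedy]
  simp only [Pi.sub_apply] at hsa ⊢
  linarith

/-- Decomposition bound for the optimality gap under
entropy-regularized greediness. -/
theorem optimality_gap_decomposition_bound
    {S A : Type*} [Fintype S] [Fintype A] [Nonempty S] [Nonempty A]
    (P : S → A → S → ℝ) (hP : IsKernel P)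
    (r : S → A → ℝ) (γ : ℝ) (hγ0 : 0 < γ) (hγ1 : γ < 1)
    (tau : ℝ) (htau : 0 < tau) (h : S → A → ℝ)
    (πg : S → A → ℝ)
    (hπg : ∀ s a, πg s a = Real.exp (h s a / tau) / ∑ b, Real.exp (h s b / tau))
    (πstar : S → A → ℝ) (hπstar : IsPolicy πstar)
    (qstar : S → A → ℝ) (hqstar : qstar = bellman P r γ πstar qstar)
    (hopt : ∀ π : S → A → ℝ, IsPolicy π →
      ∀ qπ : S → A → ℝ, qπ = bellman P r γ π qπ → ∀ s a, qπ s a ≤ qstar s a)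
    (qg : S → A → ℝ) (hqg : qg = bellman P r γ πg qg)
    (Lstar Lg : (S → A → ℝ) → (S → A → ℝ))
    (hLstar : ∀ q, Lstar q = q - γ • Ppi P πstar q)
    (hLg : ∀ q, Lg q = q - γ • Ppi P πg q) :
    ∀ s a, qstar s a - qg s a ≤
      Function.invFun Lstar
          (fun s a => bellman P r γ πg h s a + γ * tau * kerApp P (entPol πg) s a - h s a) s a
        - Function.invFun Lg (bellman P r γ πg h - h) s a :=
  optimality_gap_decomposition_bound_general P hP r γ hγ0 hγ1 tau htau h πg hπg πstar hπstar qstar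
    hqstar qg hqg Lstar Lg hLstar hLg
end
end

section
/- Proposition (equivalence of KL-greedy and entropy-greedy steps): Let S, A be finite nonempty sets, (λ_k)_{k≥0} positive reals, η_k = 1/λ_k, Z_k = Σ_{j=0}^k η_j, (q_j)_{j≥0} a sequence in ℝ^{S×A}, π_0 the uniform policy, and for each j ≥ 0 let π_{j+1}(a|s) = π_j(a|s) exp(η_j q_j(s,a)) / Σ_b π_j(b|s) exp(η_j q_j(s,b)) (the maximizer of π ↦ ⟨π, q_j⟩ − λ_j KL(π||π_j)). Define h_k = (1/Z_k) Σ_{j=0}^k η_j q_j. Then for every k ≥ 0 and every state s, π_{k+1}(·|s) is the unique maximizer over probability distributions π on A of ⟨π, h_k⟩(s) + (1/Z_k) H(π)(s); equivalently, π_{k+1}(a|s) = exp(Z_k h_k(s,a)) / Σ_b exp(Z_k h_k(s,b)). -/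
/-!
The multiplicative-weights iterates telescope: `π_{k+1}(·|s)` is the softmax of the cumulative
score `∑_{j ≤ k} η_j q_j(s, ·) = Z_k h_k(s, ·)`. The entropy-regularised objective is `1/Z_k` times
`⟨p, f⟩ + H(p)` with `f = Z_k h_k(s, ·)`, and the Gibbs variational principle
`⟨p, f⟩ + H(p) = log ∑_b exp f(b) - KL(p ‖ softmax f)` shows that the softmax is its unique
maximiser, since `KL ≥ 0` with equality only at `p = softmax f`.
-/

open Finset InformationTheory

noncomputable def softmax {A : Type*} [Fintype A] (f : A → ℝ) (a : A) : ℝ :=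
  Real.exp (f a) / ∑ b, Real.exp (f b)

section Softmax

variable {A : Type*} [Fintype A]

lemma sum_mul_add_one_div_mul_entropy_eq {c : ℝ} (hc : c ≠ 0) (g p : A → ℝ) :
    (∑ a, p a * g a) + (1 / c) * (-∑ a, p a * Real.log (p a)) =
      (1 / c) * ((∑ a, p a * (c * g a)) + (-∑ a, p a * Real.log (p a))) := by
  rw [mul_add, mul_sum]
  congr 1
  refine sum_congr rfl fun a _ => ?_
  field_simp

variable [Nonempty A]

lemma sum_exp_pos (f : A → ℝ) : 0 < ∑ b, Real.exp (f b) :=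
  sum_pos (fun _ _ => Real.exp_pos _) univ_nonempty

lemma softmax_pos (f : A → ℝ) (a : A) : 0 < softmax f a :=
  div_pos (Real.exp_pos _) (sum_exp_pos f)

lemma sum_softmax (f : A → ℝ) : ∑ a, softmax f a = 1 := by
  simp only [softmax, ← sum_div, div_self (sum_exp_pos f).ne']

lemma log_softmax (f : A → ℝ) (a : A) :
    Real.log (softmax f a) = f a - Real.log (∑ b, Real.exp (f b)) := by
  rw [softmax, Real.log_div (Real.exp_ne_zero _) (sum_exp_pos f).ne', Real.log_exp]

lemma softmax_const (c : ℝ) (a : A) : softmax (fun _ => c) a = 1 / Fintype.card A := by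
  simp only [softmax, sum_const, card_univ, nsmul_eq_mul]
  field_simp

lemma softmax_mul_exp_div_sum (f g : A → ℝ) (a : A) :
    softmax f a * Real.exp (g a) / ∑ b, softmax f b * Real.exp (g b) =
      softmax (fun b => f b + g b) a := by
  simp only [softmax, div_mul_eq_mul_div, ← sum_div, ← Real.exp_add]
  rw [div_div_div_cancel_right₀ (sum_exp_pos f).ne']

lemma sum_mul_add_entropy_eq (f p : A → ℝ) (hp : ∑ a, p a = 1) :
    (∑ a, p a * f a) + (-∑ a, p a * Real.log (p a)) =
      Real.log (∑ b, Real.exp (f b)) - ∑ a, softmax f a * klFun (p a / softmax f a) := by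
  have hterm : ∀ a, softmax f a * klFun (p a / softmax f a) =
      p a * Real.log (p a) - p a * f a + p a * Real.log (∑ b, Real.exp (f b)) +
        (softmax f a - p a) := by
    intro a
    have hσ := (softmax_pos f a).ne'
    rcases eq_or_ne (p a) 0 with h0 | h0
    · simp [h0, klFun_zero]
    · rw [klFun_apply, Real.log_div h0 hσ, log_softmax]
      field_simp
      ring
  simp only [hterm, sum_add_distrib, sum_sub_distrib, ← sum_mul, hp, sum_softmax]
  ring

lemma sum_mul_add_entropy_le (f p : A → ℝ) (hp₀ : ∀ a, 0 ≤ p a) (hp : ∑ a, p a = 1) :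
    (∑ a, p a * f a) + (-∑ a, p a * Real.log (p a)) ≤ Real.log (∑ b, Real.exp (f b)) := by
  rw [sum_mul_add_entropy_eq f p hp, sub_le_self_iff]
  exact sum_nonneg fun a _ =>
    mul_nonneg (softmax_pos f a).le (klFun_nonneg (div_nonneg (hp₀ a) (softmax_pos f a).le))

lemma eq_softmax_of_sum_mul_add_entropy_eq (f p : A → ℝ) (hp₀ : ∀ a, 0 ≤ p a)
    (hp : ∑ a, p a = 1)
    (heq : (∑ a, p a * f a) + (-∑ a, p a * Real.log (p a)) = Real.log (∑ b, Real.exp (f b))) :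
    p = softmax f := by
  have hratio : ∀ a, 0 ≤ p a / softmax f a := fun a => div_nonneg (hp₀ a) (softmax_pos f a).le
  rw [sum_mul_add_entropy_eq f p hp, sub_eq_self,
    sum_eq_zero_iff_of_nonneg fun a _ => mul_nonneg (softmax_pos f a).le (klFun_nonneg (hratio a))]
    at heq
  funext a
  have hkl := (mul_eq_zero.mp (heq a (mem_univ a))).resolve_left (softmax_pos f a).ne'
  rw [klFun_eq_zero_iff (hratio a), div_eq_one_iff_eq (softmax_pos f a).ne'] at hkl
  exact hkl

lemma sum_softmax_mul_add_entropy (f : A → ℝ) :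
    (∑ a, softmax f a * f a) + (-∑ a, softmax f a * Real.log (softmax f a)) =
      Real.log (∑ b, Real.exp (f b)) := by
  simp [sum_mul_add_entropy_eq f _ (sum_softmax f), (softmax_pos _ _).ne', klFun_one]

lemma softmax_uniquely_maximizes_entropy_regularized {c : ℝ} (hc : 0 < c) (g p : A → ℝ)
    (hp₀ : ∀ a, 0 ≤ p a) (hp : ∑ a, p a = 1) :
    let σ := softmax fun a => c * g a
    (∑ a, p a * g a) + (1 / c) * (-∑ a, p a * Real.log (p a)) ≤
        (∑ a, σ a * g a) + (1 / c) * (-∑ a, σ a * Real.log (σ a)) ∧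
      ((∑ a, p a * g a) + (1 / c) * (-∑ a, p a * Real.log (p a)) =
          (∑ a, σ a * g a) + (1 / c) * (-∑ a, σ a * Real.log (σ a)) → p = σ) := by
  intro σ
  simp only [sum_mul_add_one_div_mul_entropy_eq hc.ne', σ, sum_softmax_mul_add_entropy]
  refine ⟨?_, fun heq => ?_⟩
  · exact mul_le_mul_of_nonneg_left (sum_mul_add_entropy_le _ p hp₀ hp) (by positivity)
  · exact eq_softmax_of_sum_mul_add_entropy_eq _ p hp₀ hp
      (mul_left_cancel₀ (one_div_pos.mpr hc).ne' heq)

lemma eq_softmax_sum_of_multiplicative_weights (g w : ℕ → A → ℝ)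
    (hw₀ : ∀ a, w 0 a = 1 / Fintype.card A)
    (hw : ∀ j a, w (j + 1) a = w j a * Real.exp (g j a) / ∑ b, w j b * Real.exp (g j b)) :
    ∀ k, w k = softmax fun a => ∑ j ∈ range k, g j a := by
  intro k
  induction k with
  | zero => funext a; simp [hw₀, softmax_const]
  | succ k ih =>
    funext a
    simp only [hw, ih, softmax_mul_exp_div_sum, sum_range_succ]

end Softmax

theorem klgreedy_equals_entropy_greedy_general
    {S A : Type*} [Fintype A] [Nonempty A]
    (lam : ℕ → ℝ) (hlam : ∀ k, 0 < lam k)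
    (η : ℕ → ℝ) (hη : ∀ k, η k = 1 / lam k)
    (Z : ℕ → ℝ) (hZ : ∀ k, Z k = ∑ j ∈ Finset.range (k + 1), η j)
    (q : ℕ → S → A → ℝ)
    (π : ℕ → S → A → ℝ)
    (hπ0 : ∀ s a, π 0 s a = 1 / (Fintype.card A : ℝ))
    (hπ : ∀ j s a, π (j + 1) s a =
      π j s a * Real.exp (η j * q j s a) / ∑ b, π j s b * Real.exp (η j * q j s b))
    (h : ℕ → S → A → ℝ)
    (hh : ∀ k s a, h k s a = (1 / Z k) * ∑ j ∈ Finset.range (k + 1), η j * q j s a) :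
    ∀ k s,
      ((∀ p : A → ℝ, (∀ a, 0 ≤ p a) → (∑ a, p a = 1) →
        (∑ a, p a * h k s a) + (1 / Z k) * (-∑ a, p a * Real.log (p a)) ≤
          (∑ a, π (k + 1) s a * h k s a)
            + (1 / Z k) * (-∑ a, π (k + 1) s a * Real.log (π (k + 1) s a)) ∧
        ((∑ a, p a * h k s a) + (1 / Z k) * (-∑ a, p a * Real.log (p a)) =
          (∑ a, π (k + 1) s a * h k s a)
            + (1 / Z k) * (-∑ a, π (k + 1) s a * Real.log (π (k + 1) s a)) →
          p = fun a => π (k + 1) s a)) ∧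
      (∀ a, π (k + 1) s a =
        Real.exp (Z k * h k s a) / ∑ b, Real.exp (Z k * h k s b))) := by
  intro k s
  have hZ_pos : 0 < Z k := by
    rw [hZ]
    exact sum_pos (fun j _ => by rw [hη]; exact one_div_pos.mpr (hlam j)) nonempty_range_add_one
  have hiterate : π (k + 1) s = softmax fun a => Z k * h k s a := by
    rw [eq_softmax_sum_of_multiplicative_weights (fun j a => η j * q j s a) (fun j => π j s)
      (hπ0 s) (hπ · s) (k + 1)]
    congr 1
    funext a
    rw [hh]
    field_simp
  rw [hiterate]
  exact ⟨fun p hp₀ hp => softmax_uniquely_maximizes_entropy_regularized hZ_pos (h k s) p hp₀ hp,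
    fun a => rfl⟩

/-- Equivalence of the KL-greedy and entropy-greedy steps: the KL-greedy
iterate `π_{k+1}` is the unique maximizer of `π ↦ ⟨π, h_k⟩(s) + (1/Z_k) H(π)(s)` over
distributions on `A`, and equals the softmax of `Z_k h_k`. -/
theorem klgreedy_equals_entropy_greedy
    {S A : Type*} [Fintype S] [Fintype A] [Nonempty S] [Nonempty A]
    (lam : ℕ → ℝ) (hlam : ∀ k, 0 < lam k)
    (η : ℕ → ℝ) (hη : ∀ k, η k = 1 / lam k)
    (Z : ℕ → ℝ) (hZ : ∀ k, Z k = ∑ j ∈ Finset.range (k + 1), η j)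
    (q : ℕ → S → A → ℝ)
    (π : ℕ → S → A → ℝ)
    (hπ0 : ∀ s a, π 0 s a = 1 / (Fintype.card A : ℝ))
    (hπ : ∀ j s a, π (j + 1) s a =
      π j s a * Real.exp (η j * q j s a) / ∑ b, π j s b * Real.exp (η j * q j s b))
    (h : ℕ → S → A → ℝ)
    (hh : ∀ k s a, h k s a = (1 / Z k) * ∑ j ∈ Finset.range (k + 1), η j * q j s a) :
    ∀ k s,
      ((∀ p : A → ℝ, (∀ a, 0 ≤ p a) → (∑ a, p a = 1) →
        (∑ a, p a * h k s a) + (1 / Z k) * (-∑ a, p a * Real.log (p a)) ≤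
          (∑ a, π (k + 1) s a * h k s a)
            + (1 / Z k) * (-∑ a, π (k + 1) s a * Real.log (π (k + 1) s a)) ∧
        ((∑ a, p a * h k s a) + (1 / Z k) * (-∑ a, p a * Real.log (p a)) =
          (∑ a, π (k + 1) s a * h k s a)
            + (1 / Z k) * (-∑ a, π (k + 1) s a * Real.log (π (k + 1) s a)) →
          p = fun a => π (k + 1) s a)) ∧
      (∀ a, π (k + 1) s a =
        Real.exp (Z k * h k s a) / ∑ b, Real.exp (Z k * h k s b))) :=
  klgreedy_equals_entropy_greedy_general lam hlam η hη Z hZ q π hπ0 hπ h hh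
end

section
/- Lemma 7 (recursion for the averaged value function under errors): In the dynamic-KL scheme with evaluation step q_{k+1} = T^{1/η_k,0}_{π_{k+1}|π_k} q_k + ε_{k+1} for given ε_{k+1} ∈ ℝ^{S×A}, define E_k = −Σ_{j=1}^k η_j ε_j and X_k = Σ_{j=0}^k (η_{j+1} − η_j) T^{1/η_j,0}_{π_{j+1}|π_j} q_j. Then for every k ≥ 1: h_{k+1} = (Z_k / Z_{k+1}) · T^{0,1/Z_k}_{π_{k+1}} h_k + (1/Z_{k+1}) ( η_0 q_0 − E_{k+1} + X_k − γ P H(π_0) ). -/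
open Finset

noncomputable section

/-- The KL divergence between policies,
`KL(π₁‖π₂)(s) = ∑_a π₁(a|s)(ln π₁(a|s) - ln π₂(a|s))`. -/
def klPol {S A : Type*} [Fintype A] (π₁ π₂ : S → A → ℝ) : S → ℝ :=
  fun s => ∑ a, π₁ s a * (Real.log (π₁ s a) - Real.log (π₂ s a))

/-- The KL-regularized Bellman operator `T^{λ,0}_{π|μ} q = r + γ P(⟨π,q⟩ - λ KL(π‖μ))`. -/
def TKL {S A : Type*} [Fintype S] [Fintype A] (P : S → A → S → ℝ) (r : S → A → ℝ)
    (γ lam : ℝ) (π μ : S → A → ℝ) (q : S → A → ℝ) : S → A → ℝ :=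
  fun s a => r s a + γ * kerApp P (fun s' => dotSA π q s' - lam * klPol π μ s') s a

/-- The entropy-regularized Bellman operator `T^{0,τ}_π q = r + γ P(⟨π,q⟩ + τ H(π))`. -/
def TH {S A : Type*} [Fintype S] [Fintype A] (P : S → A → S → ℝ) (r : S → A → ℝ)
    (γ tau : ℝ) (π : S → A → ℝ) (q : S → A → ℝ) : S → A → ℝ :=
  fun s a => r s a + γ * kerApp P (fun s' => dotSA π q s' + tau * entPol π s') s a

/-- Lemma 7: recursion for the averaged value function `h_k` under
errors in the dynamic-KL scheme. -/
theorem averaged_value_recursion_under_errors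
    {S A : Type*} [Fintype S] [Fintype A] [Nonempty S] [Nonempty A]
    (P : S → A → S → ℝ) (hP : IsKernel P)
    (r : S → A → ℝ) (γ : ℝ) (hγ0 : 0 < γ) (hγ1 : γ < 1)
    (η : ℕ → ℝ) (hη : ∀ k, 0 < η k)
    (Z : ℕ → ℝ) (hZ : ∀ k, Z k = ∑ j ∈ Finset.range (k + 1), η j)
    (q ε : ℕ → S → A → ℝ)
    (h : ℕ → S → A → ℝ)
    (hh : ∀ k s a, h k s a = (1 / Z k) * ∑ j ∈ Finset.range (k + 1), η j * q j s a)
    (π : ℕ → S → A → ℝ)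
    (hπ0 : ∀ s a, π 0 s a = 1 / (Fintype.card A : ℝ))
    (hπ : ∀ k s a, π (k + 1) s a =
      Real.exp (Z k * h k s a) / ∑ b, Real.exp (Z k * h k s b))
    (hq : ∀ k s a, q (k + 1) s a =
      TKL P r γ (1 / η k) (π (k + 1)) (π k) (q k) s a + ε (k + 1) s a)
    (E : ℕ → S → A → ℝ)
    (hE : ∀ k s a, E k s a = -∑ j ∈ Finset.Icc 1 k, η j * ε j s a)
    (X : ℕ → S → A → ℝ)
    (hX : ∀ k s a, X k s a = ∑ j ∈ Finset.range (k + 1),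
      (η (j + 1) - η j) * TKL P r γ (1 / η j) (π (j + 1)) (π j) (q j) s a) :
    ∀ k, 1 ≤ k → ∀ s a,
      h (k + 1) s a =
        (Z k / Z (k + 1)) * TH P r γ (1 / Z k) (π (k + 1)) (h k) s a
          + (1 / Z (k + 1)) *
            (η 0 * q 0 s a - E (k + 1) s a + X k s a
              - γ * kerApp P (entPol (π 0)) s a) := by

  intro k _hk s a
  -- basic positivity facts
  have hcardA : (0:ℝ) < (Fintype.card A : ℝ) := by exact_mod_cast Fintype.card_pos
  have hcne : (Fintype.card A : ℝ) ≠ 0 := hcardA.ne'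
  have hZpos : ∀ n, 0 < Z n := by
    intro n; rw [hZ]
    exact Finset.sum_pos (fun j _ => hη j) (by simp)
  have hZne : ∀ n, Z n ≠ 0 := fun n => (hZpos n).ne'
  have hZh : ∀ n s a, Z n * h n s a = ∑ j ∈ Finset.range (n+1), η j * q j s a := by
    intro n s a
    rw [hh, ← mul_assoc, mul_one_div, div_self (hZne n), one_mul]
  have hZhsucc : ∀ n s a, Z (n+1) * h (n+1) s a = Z n * h n s a + η (n+1) * q (n+1) s a := by
    intro n s a; rw [hZh, hZh, Finset.sum_range_succ]
  have hexppos : ∀ n s, 0 < ∑ b, Real.exp (Z n * h n s b) :=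
    fun n s => Finset.sum_pos (fun b _ => Real.exp_pos _) Finset.univ_nonempty
  have hπsum : ∀ n s, ∑ b, π n s b = 1 := by
    intro n s
    cases n with
    | zero =>
      simp only [hπ0]
      rw [Finset.sum_const, Finset.card_univ, nsmul_eq_mul]
      field_simp
    | succ m =>
      simp only [hπ]
      rw [← Finset.sum_div, div_self (hexppos m s).ne']
  set C : ℕ → S → ℝ := fun n s => Real.log (∑ b, Real.exp (Z n * h n s b)) with hCdef
  have hlogπ : ∀ n s a, Real.log (π (n+1) s a) = Z n * h n s a - C n s := by
    intro n s a
    rw [hπ, Real.log_div (Real.exp_pos _).ne' (hexppos n s).ne', Real.log_exp, hCdef]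
  have hent0 : ∀ s, entPol (π 0) s = Real.log (Fintype.card A) := by
    intro s
    unfold entPol
    simp only [hπ0, one_div, Real.log_inv]
    rw [Finset.sum_const, Finset.card_univ, nsmul_eq_mul]
    field_simp
  -- Claim B: logsumexp equals Z_k <π_{k+1}, h_k> + H(π_{k+1})
  have claimB : ∀ n s, C n s = Z n * dotSA (π (n+1)) (h n) s + entPol (π (n+1)) s := by
    intro n s
    have h1 : ∑ b, π (n+1) s b * (Z n * h n s b - C n s)
        = Z n * ∑ b, π (n+1) s b * h n s b - C n s * ∑ b, π (n+1) s b := by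
      rw [Finset.mul_sum, Finset.mul_sum, ← Finset.sum_sub_distrib]
      exact Finset.sum_congr rfl fun b _ => by ring
    have h2 : entPol (π (n+1)) s = -(Z n * dotSA (π (n+1)) (h n) s) + C n s := by
      unfold entPol dotSA
      simp only [hlogπ]
      rw [h1, hπsum]
      ring
    rw [h2]; ring
  set F : ℕ → S → ℝ := fun n => Nat.rec (entPol (π 0)) (fun m _ => C m) n with hFdef
  have hF0 : ∀ s, F 0 s = entPol (π 0) s := fun s => rfl
  have hFsucc : ∀ j s, F (j+1) s = C j s := fun j s => rfl
  have hlogdiff : ∀ n s a, Real.log (π (n+1) s a) - Real.log (π n s a)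
      = η n * q n s a - C n s + F n s := by
    intro n s a
    cases n with
    | zero =>
      rw [hlogπ, hπ0, one_div, Real.log_inv, hF0, hent0]
      have h0 : Z 0 * h 0 s a = η 0 * q 0 s a := by
        rw [hZh]; simp
      rw [h0]; ring
    | succ m =>
      rw [hlogπ, hlogπ, hFsucc]
      have := hZhsucc m s a
      linarith
  -- Claim A: the KL identity
  have claimA : ∀ n s, η n * dotSA (π (n+1)) (q n) s - klPol (π (n+1)) (π n) s
      = C n s - F n s := by
    intro n s
    have hkl : klPol (π (n+1)) (π n) s
        = η n * dotSA (π (n+1)) (q n) s - C n s + F n s := by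
      unfold klPol dotSA
      simp only [hlogdiff]
      have h1 : ∑ b, π (n+1) s b * (η n * q n s b - C n s + F n s)
          = η n * ∑ b, π (n+1) s b * q n s b
            + (- C n s + F n s) * ∑ b, π (n+1) s b := by
        rw [Finset.mul_sum, Finset.mul_sum, ← Finset.sum_add_distrib]
        exact Finset.sum_congr rfl fun b _ => by ring
      rw [h1, hπsum]
      ring
    rw [hkl]; ring
  set T : ℕ → S → A → ℝ := fun j => TKL P r γ (1/η j) (π (j+1)) (π j) (q j) with hTdef
  -- sum of η_j T_j telescopes
  have hTη : ∀ j (s : S) (a : A), η j * T j s a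
      = η j * r s a + γ * ∑ s', P s a s' * (F (j+1) s' - F j s') := by
    intro j s a
    have hηne : η j ≠ 0 := (hη j).ne'
    have hinner : ∀ s', η j * (dotSA (π (j+1)) (q j) s' - (1/η j) * klPol (π (j+1)) (π j) s')
        = F (j+1) s' - F j s' := by
      intro s'
      rw [hFsucc, ← claimA j s']
      field_simp
    rw [hTdef]
    simp only [TKL, kerApp]
    rw [mul_add, ← mul_assoc, mul_comm (η j) γ, mul_assoc, Finset.mul_sum]
    congr 1
    congr 1
    refine Finset.sum_congr rfl fun s' _ => ?_
    rw [← hinner s']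
    ring
  have hsum : ∑ j ∈ Finset.range (k+1), η j * T j s a
      = Z k * TH P r γ (1/Z k) (π (k+1)) (h k) s a
        - γ * kerApp P (entPol (π 0)) s a := by
    have step1 : ∑ j ∈ Finset.range (k+1), η j * T j s a
        = (∑ j ∈ Finset.range (k+1), η j) * r s a
          + γ * ∑ s', P s a s' * (F (k+1) s' - F 0 s') := by
      rw [Finset.sum_congr rfl fun j _ => hTη j s a, Finset.sum_add_distrib,
        ← Finset.sum_mul, ← Finset.mul_sum, Finset.sum_comm]
      congr 2
      refine Finset.sum_congr rfl fun s' _ => ?_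
      rw [← Finset.mul_sum, Finset.sum_range_sub (fun j => F j s')]
    have h1 : ∀ s', Z k * (dotSA (π (k+1)) (h k) s' + 1 / Z k * entPol (π (k+1)) s')
        = C k s' := by
      intro s'
      rw [claimB, mul_add, ← mul_assoc, mul_one_div, div_self (hZne k), one_mul]
    have hC2 : ∀ s', F (k+1) s' - F 0 s'
        = Z k * (dotSA (π (k+1)) (h k) s' + 1 / Z k * entPol (π (k+1)) s')
          - entPol (π 0) s' := by
      intro s'; rw [hFsucc, hF0, h1]
    rw [step1, ← hZ]
    simp only [TH, kerApp]
    rw [Finset.sum_congr rfl fun s' _ => congrArg (fun x => P s a s' * x) (hC2 s')]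
    have hsplit2 : ∑ s', P s a s' * (Z k * (dotSA (π (k+1)) (h k) s' + 1 / Z k * entPol (π (k+1)) s') - entPol (π 0) s')
        = Z k * ∑ s', P s a s' * (dotSA (π (k+1)) (h k) s' + 1 / Z k * entPol (π (k+1)) s')
          - ∑ s', P s a s' * entPol (π 0) s' := by
      rw [Finset.mul_sum, ← Finset.sum_sub_distrib]
      exact Finset.sum_congr rfl fun s' _ => by ring
    rw [hsplit2]
    ring
  -- the error sum
  have hEsum : ∑ j ∈ Finset.range (k+1), η (j+1) * ε (j+1) s a = -E (k+1) s a := by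
    rw [hE, neg_neg, ← Finset.Ico_add_one_right_eq_Icc, Finset.sum_Ico_eq_sum_range]
    exact Finset.sum_congr rfl fun j _ => by rw [Nat.add_comm 1 j]
  -- the key unnormalized identity
  have key : Z (k+1) * h (k+1) s a
      = Z k * TH P r γ (1/Z k) (π (k+1)) (h k) s a
        + (η 0 * q 0 s a - E (k+1) s a + X k s a
          - γ * kerApp P (entPol (π 0)) s a) := by
    have hsplit : ∀ j, η (j+1) * q (j+1) s a
        = η j * T j s a + (η (j+1) - η j) * T j s a + η (j+1) * ε (j+1) s a := by
      intro j; rw [hq, hTdef]; ring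
    rw [hZh (k+1), Finset.sum_range_succ',
      Finset.sum_congr rfl fun j _ => hsplit j,
      Finset.sum_add_distrib, Finset.sum_add_distrib, hsum, hEsum]
    have hXk : X k s a = ∑ j ∈ Finset.range (k+1), (η (j+1) - η j) * T j s a := by
      rw [hX, hTdef]
    rw [← hXk]
    ring
  have hne := hZne (k+1)
  have hfin : h (k+1) s a = (Z (k+1) * h (k+1) s a) / Z (k+1) := by field_simp
  rw [hfin, key]
  ring

end
end

section
/- Theorem 3 (equivalence of the numerically stable GVI update and explicit KL-regularized value iteration): Let S, A be finite nonempty sets, P a transition kernel, r ∈ ℝ^{S×A}, γ ∈ (0,1), (λ_k)_{k≥0} positive reals, (π_k)_{k≥0} full-support policies, and (q_k)_{k≥0} a sequence in ℝ^{S×A}. Define q'_k = λ_k (q_k − ln π_k) ∈ ℝ^{S×A}, where (ln π_k)(s,a) = ln π_k(a|s). Then for every k ≥ 0, the following two conditions are equivalent: (i) π_{k+1}(a|s) = exp(q_k(s,a)) / Σ_b exp(q_k(s,b)) and q_{k+1} = ln π_{k+1} + r/λ_{k+1} + (λ_k/λ_{k+1}) γ P ⟨π_{k+1}, q_k − ln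 π_{k+1}⟩; (ii) π_{k+1}(a|s) = π_k(a|s) exp(q'_k(s,a)/λ_k) / Σ_b π_k(b|s) exp(q'_k(s,b)/λ_k) (the maximizer of π ↦ ⟨π, q'_k⟩ − λ_k KL(π||π_k)) and q'_{k+1} = r + γ P ( ⟨π_{k+1}, q'_k⟩ − λ_k KL(π_{k+1}||π_k) ). -/
open Finset

noncomputable section

/-- Theorem 3: equivalence of the numerically stable GVI update and
explicit KL-regularized value iteration. -/
theorem gvi_update_equivalence
    {S A : Type*} [Fintype S] [Fintype A] [Nonempty S] [Nonempty A]
    (P : S → A → S → ℝ) (hP : IsKernel P)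
    (r : S → A → ℝ) (γ : ℝ) (hγ0 : 0 < γ) (hγ1 : γ < 1)
    (lam : ℕ → ℝ) (hlam : ∀ k, 0 < lam k)
    (π : ℕ → S → A → ℝ)
    (hπ : ∀ k, IsPolicy (π k)) (hπpos : ∀ k s a, 0 < π k s a)
    (q : ℕ → S → A → ℝ)
    (q' : ℕ → S → A → ℝ)
    (hq' : ∀ k s a, q' k s a = lam k * (q k s a - Real.log (π k s a))) :
    ∀ k : ℕ,
      ((∀ s a, π (k + 1) s a = Real.exp (q k s a) / ∑ b, Real.exp (q k s b)) ∧
        (∀ s a, q (k + 1) s a =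
          Real.log (π (k + 1) s a) + r s a / lam (k + 1)
            + lam k / lam (k + 1) * γ *
              kerApp P (dotSA (π (k + 1))
                (fun s' a' => q k s' a' - Real.log (π (k + 1) s' a'))) s a))
      ↔
      ((∀ s a, π (k + 1) s a =
          π k s a * Real.exp (q' k s a / lam k)
            / ∑ b, π k s b * Real.exp (q' k s b / lam k)) ∧
        (∀ s a, q' (k + 1) s a =
          r s a + γ *
            kerApp P (fun s' => dotSA (π (k + 1)) (q' k) s'
              - lam k * klPol (π (k + 1)) (π k) s') s a)) := by
  intro k
  have hlk := hlam k
  have hlk1 := hlam (k+1)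
  have hpol : ∀ s a, π k s a * Real.exp (q' k s a / lam k) = Real.exp (q k s a) := by
    intro s a
    rw [hq', mul_div_cancel_left₀ _ (ne_of_gt hlk), Real.exp_sub,
      Real.exp_log (hπpos k s a)]
    rw [mul_div_cancel₀ _ (ne_of_gt (hπpos k s a))]
  have hker : ∀ s a,
      kerApp P (fun s' => dotSA (π (k+1)) (q' k) s' - lam k * klPol (π (k+1)) (π k) s') s a
      = lam k * kerApp P (dotSA (π (k+1))
          (fun s' a' => q k s' a' - Real.log (π (k+1) s' a'))) s a := by
    intro s a
    unfold kerApp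
    rw [Finset.mul_sum]
    refine Finset.sum_congr rfl fun s' _ => ?_
    have h2 : dotSA (π (k+1)) (q' k) s' - lam k * klPol (π (k+1)) (π k) s'
        = lam k * dotSA (π (k+1)) (fun s'' a' => q k s'' a' - Real.log (π (k+1) s'' a')) s' := by
      unfold dotSA klPol
      rw [Finset.mul_sum, Finset.mul_sum, ← Finset.sum_sub_distrib]
      refine Finset.sum_congr rfl fun a' _ => ?_
      rw [hq']
      ring
    dsimp only
    rw [h2]; ring
  constructor
  · rintro ⟨hpi, hqe⟩
    constructor
    · intro s a
      rw [hpi s a]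
      congr 1
      · exact (hpol s a).symm
      · exact Finset.sum_congr rfl fun b _ => (hpol s b).symm
    · intro s a
      rw [hq', hqe s a, hker s a]
      field_simp
      ring
  · rintro ⟨hpi, hqe⟩
    have hpi' : ∀ s a, π (k+1) s a = Real.exp (q k s a) / ∑ b, Real.exp (q k s b) := by
      intro s a
      rw [hpi s a, hpol s a]
      congr 1
      exact Finset.sum_congr rfl fun b _ => hpol s b
    refine ⟨hpi', fun s a => ?_⟩
    have h := hqe s a
    rw [hq', hker s a] at h
    have hne : lam (k+1) ≠ 0 := ne_of_gt hlk1
    field_simp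
    nlinarith [h]
end
end
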